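/- Let x, y ∈ ℝ^n have nondecreasing coordinates and suppose x is majorized by y. Then there exist measures μ_1, …, μ_n on ℝ such that ∑_{i=1}^n μ_i = ∑_{k=1}^n δ_{y_k} (the counting measure on the multiset {y_1,…,y_n}), ∫ t dμ_i(t) = x_i for each i (so each μ_i is a probability measure), and the sequence (μ_i)_{1≤i≤n} is nondecreasing in stochastic order: μ_i ≼_sto μ_{i+1} for i = 1, …, n−1. -/

import Mathlib

open Finset MeasureTheory
open scoped ENNReal

namespace StrassenAux

/-! ### Cumulative sum helpers -/

def C {N : ℕ} (f : Fin N → ℝ) (k : ℕ) : ℝ :=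
  ∑ i ∈ Finset.univ.filter (fun i : Fin N => (i : ℕ) < k), f i

def xtd {N : ℕ} (f : Fin N → ℝ) : ℕ → ℝ := fun j => if h : j < N then f ⟨j, h⟩ else 0

lemma C_eq {N : ℕ} (f : Fin N → ℝ) {k : ℕ} (hk : k ≤ N) :
    C f k = ∑ j ∈ Finset.range k, xtd f j := by
  classical
  unfold C xtd
  rw [Finset.sum_filter]
  have h1 : ∀ i : Fin N, (if (i : ℕ) < k then f i else 0)
      = (fun j => if j < k then (if h : j < N then f ⟨j, h⟩ else 0) else 0) ((i : ℕ)) := by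
    intro i; simp [i.isLt]
  rw [Finset.sum_congr rfl fun i _ => h1 i]
  rw [Fin.sum_univ_eq_sum_range (fun j => if j < k then (if h : j < N then f ⟨j, h⟩ else 0) else 0)]
  rw [← Finset.sum_subset (Finset.range_subset_range.2 hk) (fun j _ hjk => by
    simp only [Finset.mem_range] at hjk
    simp [hjk])]
  refine Finset.sum_congr rfl fun j hj => ?_
  simp only [Finset.mem_range] at hj
  simp [hj]

lemma sum_eq_C {N : ℕ} (f : Fin N → ℝ) : ∑ i, f i = C f N := by
  unfold C
  congr 1
  exact (Finset.filter_true_of_mem fun i _ => i.isLt).symm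

lemma C_zero {N : ℕ} (f : Fin N → ℝ) : C f 0 = 0 := by
  rw [C_eq f (Nat.zero_le N)]
  simp

lemma card_filter_lt {N : ℕ} {k : ℕ} (hk : k ≤ N) :
    ((Finset.univ.filter (fun i : Fin N => (i : ℕ) < k)).card : ℝ) = k := by
  classical
  have := C_eq (fun _ : Fin N => (1 : ℝ)) hk
  unfold C at this
  rw [Finset.sum_const, nsmul_eq_mul, mul_one] at this
  rw [this]
  have h2 : ∀ j ∈ Finset.range k, xtd (fun _ : Fin N => (1:ℝ)) j = 1 := by
    intro j hj
    simp only [Finset.mem_range] at hj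
    unfold xtd
    rw [dif_pos (lt_of_lt_of_le hj hk)]
  rw [Finset.sum_congr rfl h2]
  simp

lemma sum_range_add' (g : ℕ → ℝ) (a b : ℕ) :
    ∑ j ∈ Finset.range (a + b), g j
      = ∑ j ∈ Finset.range a, g j + ∑ j ∈ Finset.range b, g (a + j) := by
  rw [Finset.range_eq_Ico,
    ← Finset.sum_Ico_consecutive g (Nat.zero_le a) (Nat.le_add_right a b),
    Finset.sum_Ico_eq_sum_range]
  simp [Finset.sum_Ico_eq_sum_range]

lemma sumL {m q : ℕ} (f : Fin (m + q) → ℝ) :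
    ∑ i : Fin m, f (Fin.castAdd q i) = C f m := by
  rw [C_eq f (Nat.le_add_right m q)]
  rw [← Fin.sum_univ_eq_sum_range (fun j => xtd f j)]
  refine Finset.sum_congr rfl fun i _ => ?_
  unfold xtd
  rw [dif_pos (by omega : ((i : ℕ)) < m + q)]
  congr 1

lemma cumL {m q : ℕ} (f : Fin (m + q) → ℝ) {k : ℕ} (hk : k ≤ m) :
    C (fun i : Fin m => f (Fin.castAdd q i)) k = C f k := by
  rw [C_eq _ hk, C_eq f (by omega)]
  refine Finset.sum_congr rfl fun j hj => ?_
  have hjm : j < m := lt_of_lt_of_le (Finset.mem_range.1 hj) hk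
  unfold xtd
  rw [dif_pos hjm, dif_pos (by omega : j < m + q)]
  congr 1

lemma cumU {m q : ℕ} (f : Fin (m + q) → ℝ) {k : ℕ} (hk : k ≤ q) :
    C (fun j : Fin q => f (Fin.natAdd m j)) k = C f (m + k) - C f m := by
  rw [C_eq _ hk, C_eq f (by omega), C_eq f (Nat.le_add_right m q)]
  rw [sum_range_add' (xtd f) m k, add_sub_cancel_left]
  refine Finset.sum_congr rfl fun j hj => ?_
  have hjq : j < q := lt_of_lt_of_le (Finset.mem_range.1 hj) hk
  unfold xtd
  rw [dif_pos hjq, dif_pos (by omega : m + j < m + q)]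
  congr 1

lemma sumU {m q : ℕ} (f : Fin (m + q) → ℝ) :
    ∑ j : Fin q, f (Fin.natAdd m j) = C f (m + q) - C f m := by
  rw [sum_eq_C (fun j : Fin q => f (Fin.natAdd m j)), cumU f le_rfl]

/-! ### Measure helpers -/

lemma integrable_id_dirac (a : ℝ) : Integrable (fun t : ℝ => t) (Measure.dirac a) := by
  refine ⟨measurable_id.aestronglyMeasurable, ?_⟩
  simp only [HasFiniteIntegral, lintegral_dirac]
  exact ENNReal.coe_lt_top

lemma integrable_id_sum_dirac {N : ℕ} (w : Fin N → ℝ) :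
    Integrable (fun t : ℝ => t) (∑ k, Measure.dirac (w k)) :=
  integrable_finset_sum_measure.2 fun k _ => integrable_id_dirac (w k)

lemma le_sum_measure {ι : Type*} [Fintype ι] (ρ : ι → Measure ℝ) (i : ι) :
    ρ i ≤ ∑ j, ρ j := by
  refine Measure.le_iff.2 fun s _ => ?_
  rw [Measure.finset_sum_apply]
  exact Finset.single_le_sum (f := fun j => ρ j s) (fun j _ => zero_le) (Finset.mem_univ i)

lemma integral_sum_dirac {N : ℕ} (w : Fin N → ℝ) :
    ∫ t, t ∂(∑ k, Measure.dirac (w k)) = ∑ k, w k := by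
  rw [integral_finset_sum_measure fun k _ => integrable_id_dirac (w k)]
  simp [integral_dirac]

def Sol (n : ℕ) (x y : Fin n → ℝ) : Prop :=
  ∃ μ : Fin n → Measure ℝ,
    (∀ i, IsProbabilityMeasure (μ i)) ∧
    (∑ i, μ i = ∑ k, Measure.dirac (y k)) ∧
    (∀ i, ∫ t, t ∂(μ i) = x i) ∧
    (∀ i j : Fin n, i ≤ j → ∀ t : ℝ, (μ j) (Set.Iic t) ≤ (μ i) (Set.Iic t))

/-! ### Constant-barycenter solution -/

lemma const_sol (n : ℕ) (hn : n ≠ 0) (y : Fin n → ℝ) (c : ℝ)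
    (hc : (n : ℝ) * c = ∑ i, y i) : Sol n (fun _ => c) y := by
  set ν : Measure ℝ := ∑ k, Measure.dirac (y k) with hν
  have hnE : ((n : ℝ≥0∞)) ≠ 0 := by exact_mod_cast hn
  have hnT : ((n : ℝ≥0∞)) ≠ ⊤ := ENNReal.natCast_ne_top n
  refine ⟨fun _ => ((n : ℝ≥0∞))⁻¹ • ν, fun i => ?_, ?_, fun i => ?_, fun i j _ t => le_rfl⟩
  · constructor
    rw [Measure.smul_apply, smul_eq_mul, hν, Measure.finset_sum_apply]
    simp [ENNReal.inv_mul_cancel hnE hnT]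
  · rw [Finset.sum_const, Finset.card_univ, Fintype.card_fin]
    rw [← Nat.cast_smul_eq_nsmul ℝ≥0∞, smul_smul, ENNReal.mul_inv_cancel hnE hnT, one_smul]
  · have hnR : (n : ℝ) ≠ 0 := Nat.cast_ne_zero.2 hn
    rw [integral_smul_measure, hν, integral_sum_dirac]
    have h3 : ((n : ℝ≥0∞))⁻¹.toReal = (n : ℝ)⁻¹ := by
      simp [ENNReal.toReal_inv]
    rw [h3, smul_eq_mul, ← hc, ← mul_assoc, inv_mul_cancel₀ hnR, one_mul]

/-! ### Splitting at a touching point -/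

lemma touch_sol (n : ℕ)
    (IH : ∀ m, m < n → ∀ x y : Fin m → ℝ, Monotone x → Monotone y →
      (∑ i, x i = ∑ i, y i) → (∀ k, k < m → C y k ≤ C x k) → Sol m x y)
    (x y : Fin n → ℝ) (hx : Monotone x) (hy : Monotone y)
    (hsum : ∑ i, x i = ∑ i, y i)
    (hmaj : ∀ k, k < n → C y k ≤ C x k)
    (m : ℕ) (hm0 : 0 < m) (hmn : m < n) (ht : C x m = C y m) : Sol n x y := by
  obtain ⟨q, rfl⟩ : ∃ q, n = m + q := ⟨n - m, by omega⟩
  have hq0 : 0 < q := by omega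
  -- lower block
  have hxL : Monotone (fun i : Fin m => x (Fin.castAdd q i)) := fun a b hab => hx (by
    simp only [Fin.le_def, Fin.coe_castAdd]
    exact Fin.le_def.1 hab)
  have hyL : Monotone (fun i : Fin m => y (Fin.castAdd q i)) := fun a b hab => hy (by
    simp only [Fin.le_def, Fin.coe_castAdd]
    exact Fin.le_def.1 hab)
  have hsumL : (∑ i : Fin m, x (Fin.castAdd q i)) = ∑ i : Fin m, y (Fin.castAdd q i) := by
    rw [sumL x, sumL y]; exact ht
  have hmajL : ∀ k, k < m → C (fun i : Fin m => y (Fin.castAdd q i)) k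
      ≤ C (fun i : Fin m => x (Fin.castAdd q i)) k := by
    intro k hk
    rw [cumL x (le_of_lt hk), cumL y (le_of_lt hk)]
    exact hmaj k (by omega)
  obtain ⟨μL, hL1, hL2, hL3, hL4⟩ := IH m (by omega) _ _ hxL hyL hsumL hmajL
  -- upper block
  have hxU : Monotone (fun j : Fin q => x (Fin.natAdd m j)) := fun a b hab => hx (by
    simp only [Fin.le_def, Fin.coe_natAdd]
    exact Nat.add_le_add_left (Fin.le_def.1 hab) m)
  have hyU : Monotone (fun j : Fin q => y (Fin.natAdd m j)) := fun a b hab => hy (by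
    simp only [Fin.le_def, Fin.coe_natAdd]
    exact Nat.add_le_add_left (Fin.le_def.1 hab) m)
  have hsumU : (∑ j : Fin q, x (Fin.natAdd m j)) = ∑ j : Fin q, y (Fin.natAdd m j) := by
    rw [sumU x, sumU y, ← sum_eq_C x, ← sum_eq_C y, hsum, ht]
  have hmajU : ∀ k, k < q → C (fun j : Fin q => y (Fin.natAdd m j)) k
      ≤ C (fun j : Fin q => x (Fin.natAdd m j)) k := by
    intro k hk
    rw [cumU x (le_of_lt hk), cumU y (le_of_lt hk), ht]
    exact sub_le_sub_right (hmaj (m + k) (by omega)) _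
  obtain ⟨μU, hU1, hU2, hU3, hU4⟩ := IH q (by omega) _ _ hxU hyU hsumU hmajU
  refine ⟨Fin.addCases μL μU, ?_, ?_, ?_, ?_⟩
  · intro i
    refine Fin.addCases (fun i' => ?_) (fun j' => ?_) i
    · simp only [Fin.addCases_left]; exact hL1 i'
    · simp only [Fin.addCases_right]; exact hU1 j'
  · rw [Fin.sum_univ_add]
    simp only [Fin.addCases_left, Fin.addCases_right]
    rw [hL2, hU2, ← Fin.sum_univ_add (f := fun k : Fin (m + q) => Measure.dirac (y k))]
  · intro i
    refine Fin.addCases (fun i' => ?_) (fun j' => ?_) i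
    · simp only [Fin.addCases_left]; exact hL3 i'
    · simp only [Fin.addCases_right]; exact hU3 j'
  · intro i j hij t
    by_cases hi : (i : ℕ) < m
    · have hieq : i = Fin.castAdd q ⟨(i : ℕ), hi⟩ := by apply Fin.ext; simp
      by_cases hj : (j : ℕ) < m
      · have hjeq : j = Fin.castAdd q ⟨(j : ℕ), hj⟩ := by apply Fin.ext; simp
        rw [hieq, hjeq]
        simp only [Fin.addCases_left]
        exact hL4 _ _ (by simp only [Fin.mk_le_mk]; exact Fin.le_def.1 hij) t
      · have hjeq : j = Fin.natAdd m ⟨(j : ℕ) - m, by omega⟩ := by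
          apply Fin.ext; simp; omega
        rw [hieq, hjeq]
        simp only [Fin.addCases_left, Fin.addCases_right]
        have hUle : μU ⟨(j : ℕ) - m, by omega⟩
            ≤ ∑ k : Fin q, Measure.dirac (y (Fin.natAdd m k)) := hU2 ▸ le_sum_measure μU _
        have hLle : μL ⟨(i : ℕ), hi⟩
            ≤ ∑ k : Fin m, Measure.dirac (y (Fin.castAdd q k)) := hL2 ▸ le_sum_measure μL _
        by_cases hcut : t < y (Fin.natAdd m ⟨0, hq0⟩)
        · have hz : (∑ k : Fin q, Measure.dirac (y (Fin.natAdd m k))) (Set.Iic t) = 0 := by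
            rw [Measure.finset_sum_apply]
            refine Finset.sum_eq_zero fun k _ => ?_
            have hge : y (Fin.natAdd m ⟨0, hq0⟩) ≤ y (Fin.natAdd m k) := hy (by
              simp [Fin.le_def])
            rw [Measure.dirac_apply]
            have : y (Fin.natAdd m k) ∉ Set.Iic t := by
              simp only [Set.mem_Iic, not_le]
              linarith
            simp [Set.indicator_of_notMem this]
          exact le_trans (le_trans (Measure.le_iff'.1 hUle _) (le_of_eq hz)) (zero_le)
        · push_neg at hcut
          have hz : (∑ k : Fin m, Measure.dirac (y (Fin.castAdd q k))) (Set.Ioi t) = 0 := by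
            rw [Measure.finset_sum_apply]
            refine Finset.sum_eq_zero fun k _ => ?_
            have hle : y (Fin.castAdd q k) ≤ y (Fin.natAdd m ⟨0, hq0⟩) := hy (by
              simp only [Fin.le_def, Fin.coe_castAdd, Fin.coe_natAdd]
              omega)
            rw [Measure.dirac_apply]
            have : y (Fin.castAdd q k) ∉ Set.Ioi t := by
              simp only [Set.mem_Ioi, not_lt]
              linarith
            simp [Set.indicator_of_notMem this]
          haveI := hL1 ⟨(i : ℕ), hi⟩
          haveI := hU1 ⟨(j : ℕ) - m, by omega⟩
          have h0 : μL ⟨(i : ℕ), hi⟩ (Set.Ioi t) = 0 :=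
            le_antisymm (le_trans (Measure.le_iff'.1 hLle _) (le_of_eq hz)) (zero_le)
          have h1 : μL ⟨(i : ℕ), hi⟩ (Set.Iic t) = 1 := by
            have hcompl := prob_compl_eq_one_sub (μ := μL ⟨(i : ℕ), hi⟩) (measurableSet_Ioi (a := t))
            rw [Set.compl_Ioi] at hcompl
            rw [hcompl, h0, tsub_zero]
          rw [h1]
          exact prob_le_one
    · have hj : ¬ (j : ℕ) < m := by
        have := Fin.le_def.1 hij
        omega
      have hieq : i = Fin.natAdd m ⟨(i : ℕ) - m, by omega⟩ := by
        apply Fin.ext; simp; omega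
      have hjeq : j = Fin.natAdd m ⟨(j : ℕ) - m, by omega⟩ := by
        apply Fin.ext; simp; omega
      rw [hieq, hjeq]
      simp only [Fin.addCases_right]
      refine hU4 _ _ ?_ t
      have := Fin.le_def.1 hij
      simp only [Fin.le_def]
      omega

end StrassenAux

namespace StrassenAux2
open StrassenAux

lemma prefix_upper {N k : ℕ} (hk0 : 0 < k) (hkN : k < N) (f : Fin N → ℝ) (hf : Monotone f) :
    C f k ≤ (k : ℝ) * f ⟨k - 1, by omega⟩ := by
  rw [C_eq f (le_of_lt hkN)]
  have h : ∀ j ∈ Finset.range k, xtd f j ≤ f ⟨k - 1, by omega⟩ := by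
    intro j hj
    have hj' : j < k := Finset.mem_range.1 hj
    unfold xtd
    rw [dif_pos (by omega : j < N)]
    exact hf (by simp only [Fin.mk_le_mk]; omega)
  calc ∑ j ∈ Finset.range k, xtd f j ≤ ∑ _j ∈ Finset.range k, f ⟨k - 1, by omega⟩ :=
        Finset.sum_le_sum h
    _ = (k : ℝ) * f ⟨k - 1, by omega⟩ := by
        rw [Finset.sum_const, Finset.card_range, nsmul_eq_mul]

lemma tail_split {N k : ℕ} (hkN : k ≤ N) (f : Fin N → ℝ) :
    (∑ i, f i) = C f k + ∑ j ∈ Finset.range (N - k), xtd f (k + j) := by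
  have h := sum_range_add' (xtd f) k (N - k)
  rw [Nat.add_sub_cancel' hkN] at h
  rw [sum_eq_C f, C_eq f le_rfl, h, C_eq f hkN]

lemma prefix_lower {N k : ℕ} (hk0 : 0 < k) (hkN : k < N) (f : Fin N → ℝ) (hf : Monotone f) :
    ((N : ℝ) - k) * f ⟨k - 1, by omega⟩ ≤ (∑ i, f i) - C f k := by
  rw [tail_split (le_of_lt hkN) f, add_sub_cancel_left]
  have h : ∀ j ∈ Finset.range (N - k), f ⟨k - 1, by omega⟩ ≤ xtd f (k + j) := by
    intro j hj
    have hj' : j < N - k := Finset.mem_range.1 hj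
    unfold xtd
    rw [dif_pos (by omega : k + j < N)]
    exact hf (by simp only [Fin.mk_le_mk]; omega)
  calc ((N : ℝ) - k) * f ⟨k - 1, by omega⟩
      = ∑ _j ∈ Finset.range (N - k), f ⟨k - 1, by omega⟩ := by
        rw [Finset.sum_const, Finset.card_range, nsmul_eq_mul, Nat.cast_sub (le_of_lt hkN)]
    _ ≤ ∑ j ∈ Finset.range (N - k), xtd f (k + j) := Finset.sum_le_sum h

lemma prefix_avg {N k : ℕ} (hk : k ≤ N) (f : Fin N → ℝ) (hf : Monotone f) :
    (N : ℝ) * C f k ≤ (k : ℝ) * ∑ i, f i := by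
  rcases Nat.eq_zero_or_pos k with rfl | hk0
  · rw [C_zero]
    simp
  rcases eq_or_lt_of_le hk with rfl | hkN
  · rw [← sum_eq_C f, mul_comm]
  have h1 := prefix_upper hk0 hkN f hf
  have h2 := prefix_lower hk0 hkN f hf
  have hNk : (0:ℝ) ≤ (N:ℝ) - k := by
    have : (k:ℝ) ≤ N := by exact_mod_cast le_of_lt hkN
    linarith
  have hkR : (0:ℝ) ≤ (k:ℝ) := Nat.cast_nonneg k
  nlinarith [h1, h2]

lemma prefix_avg_lt {N k : ℕ} (hk0 : 0 < k) (hkN : k < N) (f : Fin N → ℝ) (hf : Monotone f)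
    (hnc : ∃ i j : Fin N, f i ≠ f j) :
    (N : ℝ) * C f k < (k : ℝ) * ∑ i, f i := by
  have hN0 : 0 < N := by omega
  have hlt : f ⟨0, hN0⟩ < f ⟨N - 1, by omega⟩ := by
    rcases lt_or_ge (f ⟨0, hN0⟩) (f ⟨N - 1, by omega⟩) with h | h
    · exact h
    · exfalso
      obtain ⟨i, j, hij⟩ := hnc
      have hci : ∀ i : Fin N, f i = f ⟨0, hN0⟩ := by
        intro i
        rcases i with ⟨iv, hiv⟩
        have h1 : f ⟨0, hN0⟩ ≤ f ⟨iv, hiv⟩ := hf (by simp only [Fin.mk_le_mk]; omega)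
        have h2 : f ⟨iv, hiv⟩ ≤ f ⟨N - 1, by omega⟩ := hf (by simp only [Fin.mk_le_mk]; omega)
        linarith
      exact hij (by rw [hci i, hci j])
  have hNk : (0:ℝ) < (N:ℝ) - k := by
    have h1 : (k:ℝ) < N := by exact_mod_cast hkN
    linarith
  have hkR : (0:ℝ) < (k:ℝ) := by exact_mod_cast hk0
  rcases lt_or_ge (f ⟨0, hN0⟩) (f ⟨k - 1, by omega⟩) with hA | hB
  · -- strict upper bound on the prefix
    have h1 : C f k < (k : ℝ) * f ⟨k - 1, by omega⟩ := by
      rw [C_eq f (le_of_lt hkN)]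
      have hmem : (0 : ℕ) ∈ Finset.range k := Finset.mem_range.2 hk0
      have hle : ∀ j ∈ Finset.range k, xtd f j ≤ f ⟨k - 1, by omega⟩ := by
        intro j hj
        have hj' : j < k := Finset.mem_range.1 hj
        unfold xtd
        rw [dif_pos (by omega : j < N)]
        exact hf (by simp only [Fin.mk_le_mk]; omega)
      have hstrict : xtd f 0 < f ⟨k - 1, by omega⟩ := by
        unfold xtd
        rw [dif_pos (by omega : (0:ℕ) < N)]
        exact hA
      calc ∑ j ∈ Finset.range k, xtd f j
          < ∑ _j ∈ Finset.range k, f ⟨k - 1, by omega⟩ :=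
            Finset.sum_lt_sum (fun j hj => hle j hj) ⟨0, hmem, hstrict⟩
        _ = (k : ℝ) * f ⟨k - 1, by omega⟩ := by
            rw [Finset.sum_const, Finset.card_range, nsmul_eq_mul]
    have h2 := prefix_lower hk0 hkN f hf
    nlinarith [h1, h2]
  · -- prefix is constant, so the tail is strictly bigger
    have hBeq : f ⟨k - 1, by omega⟩ = f ⟨0, hN0⟩ := by
      have : f ⟨0, hN0⟩ ≤ f ⟨k - 1, by omega⟩ := hf (by simp only [Fin.mk_le_mk]; omega)
      linarith
    have h1 := prefix_upper hk0 hkN f hf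
    have h2 : ((N : ℝ) - k) * f ⟨k - 1, by omega⟩ < (∑ i, f i) - C f k := by
      rw [tail_split (le_of_lt hkN) f, add_sub_cancel_left]
      have hmem : N - k - 1 ∈ Finset.range (N - k) := Finset.mem_range.2 (by omega)
      have hle : ∀ j ∈ Finset.range (N - k), f ⟨k - 1, by omega⟩ ≤ xtd f (k + j) := by
        intro j hj
        have hj' : j < N - k := Finset.mem_range.1 hj
        unfold xtd
        rw [dif_pos (by omega : k + j < N)]
        exact hf (by simp only [Fin.mk_le_mk]; omega)
      have hstrict : f ⟨k - 1, by omega⟩ < xtd f (k + (N - k - 1)) := by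
        unfold xtd
        rw [dif_pos (by omega : k + (N - k - 1) < N)]
        rw [hBeq]
        have : f ⟨k + (N - k - 1), by omega⟩ = f ⟨N - 1, by omega⟩ := by
          congr 1
          simp only [Fin.mk.injEq]
          omega
        rw [this]
        exact hlt
      calc ((N : ℝ) - k) * f ⟨k - 1, by omega⟩
          = ∑ _j ∈ Finset.range (N - k), f ⟨k - 1, by omega⟩ := by
            rw [Finset.sum_const, Finset.card_range, nsmul_eq_mul, Nat.cast_sub (le_of_lt hkN)]
        _ < ∑ j ∈ Finset.range (N - k), xtd f (k + j) :=
            Finset.sum_lt_sum (fun j hj => hle j hj) ⟨N - k - 1, hmem, hstrict⟩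
    nlinarith [h1, h2]

end StrassenAux2

namespace StrassenAux3
open StrassenAux StrassenAux2

theorem main : ∀ n : ℕ, ∀ x y : Fin n → ℝ, Monotone x → Monotone y →
    (∑ i, x i = ∑ i, y i) → (∀ k, k < n → C y k ≤ C x k) → Sol n x y := by
  intro n
  induction n using Nat.strong_induction_on with
  | _ n IH =>
  intro x y hx hy hsum hmaj
  rcases Nat.eq_zero_or_pos n with hn0 | hn0
  · subst hn0
    exact ⟨fun i => i.elim0, fun i => i.elim0, by simp, fun i => i.elim0, fun i => i.elim0⟩
  by_cases htouch : ∃ m, 0 < m ∧ m < n ∧ C x m = C y m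
  · obtain ⟨m, hm0, hmn, ht⟩ := htouch
    exact touch_sol n IH x y hx hy hsum hmaj m hm0 hmn ht
  by_cases hconst : ∀ i : Fin n, x i = x ⟨0, hn0⟩
  · have hc : (n : ℝ) * x ⟨0, hn0⟩ = ∑ i, y i := by
      rw [← hsum, Finset.sum_congr rfl fun i _ => hconst i, Finset.sum_const,
        Finset.card_univ, Fintype.card_fin, nsmul_eq_mul]
    obtain ⟨μ, h1, h2, h3, h4⟩ := const_sol n (by omega) y (x ⟨0, hn0⟩) hc
    exact ⟨μ, h1, h2, fun i => by rw [h3 i, hconst i], h4⟩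
  -- strict, non-constant case
  push_neg at htouch hconst
  obtain ⟨i0, hi0⟩ := hconst
  have hn2 : 2 ≤ n := by
    by_contra h
    have hone : n = 1 := by omega
    subst hone
    exact hi0 (congrArg x (Subsingleton.elim _ _))
  have hnR : (0:ℝ) < n := by exact_mod_cast hn0
  set mb : ℝ := (∑ i, y i) / n with hmb
  have hnmb : (n:ℝ) * mb = ∑ i, y i := by
    rw [hmb]
    field_simp
  have hstrict : ∀ k, 0 < k → k < n → C y k < C x k := fun k h1 h2 =>
    lt_of_le_of_ne (hmaj k h2) fun h => htouch k h1 h2 h.symm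
  have hxnc : ∃ i j : Fin n, x i ≠ x j := ⟨i0, ⟨0, hn0⟩, hi0⟩
  have hden : ∀ k, 0 < k → k < n → C y k < k * mb := by
    intro k h1 h2
    have hxp := prefix_avg (le_of_lt h2) x hx
    have key : (n:ℝ) * C y k < n * (k * mb) := by
      calc (n:ℝ) * C y k < n * C x k := by nlinarith [hstrict k h1 h2]
        _ ≤ k * ∑ i, x i := hxp
        _ = k * ∑ i, y i := by rw [hsum]
        _ = n * (k * mb) := by rw [← hnmb]; ring
    nlinarith [key]
  set g : ℕ → ℝ := fun k => (C x k - C y k) / (k * mb - C y k) with hg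
  obtain ⟨k0, hk0mem, hk0min⟩ := Finset.exists_min_image (Finset.Ioo 0 n) g
    ⟨1, Finset.mem_Ioo.2 ⟨Nat.zero_lt_one, by omega⟩⟩
  have hk01 := Finset.mem_Ioo.1 hk0mem
  have hd0 : (0:ℝ) < k0 * mb - C y k0 := sub_pos.2 (hden k0 hk01.1 hk01.2)
  set θ : ℝ := g k0 with hθ
  have hθpos : 0 < θ := div_pos (sub_pos.2 (hstrict k0 hk01.1 hk01.2)) hd0
  have hθlt1 : θ < 1 := by
    rw [hθ, hg]
    apply (div_lt_one hd0).2
    have h1 := prefix_avg_lt hk01.1 hk01.2 x hx hxnc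
    have h2 : (n:ℝ) * C x k0 < n * (k0 * mb) := by
      calc (n:ℝ) * C x k0 < k0 * ∑ i, x i := h1
        _ = k0 * ∑ i, y i := by rw [hsum]
        _ = n * (k0 * mb) := by rw [← hnmb]; ring
    nlinarith [h2]
  have h1θ : (0:ℝ) < 1 - θ := by linarith
  set z : Fin n → ℝ := fun i => (x i - θ * mb) / (1 - θ) with hz
  have hzmono : Monotone z := by
    intro a' b' hab'
    show (x a' - θ * mb) / (1 - θ) ≤ (x b' - θ * mb) / (1 - θ)
    have h := hx hab'
    rw [div_le_div_iff₀ h1θ h1θ]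
    nlinarith [h]
  have hCz : ∀ k, k ≤ n → C z k = (C x k - k * (θ * mb)) / (1 - θ) := by
    intro k hk
    unfold C
    calc ∑ i ∈ Finset.univ.filter (fun i : Fin n => (i:ℕ) < k), z i
        = (∑ i ∈ Finset.univ.filter (fun i : Fin n => (i:ℕ) < k), (x i - θ * mb)) / (1 - θ) := by
          rw [Finset.sum_div]
      _ = ((∑ i ∈ Finset.univ.filter (fun i : Fin n => (i:ℕ) < k), x i)
            - k * (θ * mb)) / (1 - θ) := by
          rw [Finset.sum_sub_distrib, Finset.sum_const, nsmul_eq_mul, card_filter_lt hk]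
  have hzsum : ∑ i, z i = ∑ i, y i := by
    rw [sum_eq_C z, hCz n le_rfl, ← sum_eq_C x, hsum, ← hnmb]
    field_simp
  have hzmaj : ∀ k, k < n → C y k ≤ C z k := by
    intro k hk
    rcases Nat.eq_zero_or_pos k with rfl | hkpos
    · rw [C_zero, C_zero]
    rw [hCz k (le_of_lt hk), le_div_iff₀ h1θ]
    have hθle : θ ≤ g k := hk0min k (Finset.mem_Ioo.2 ⟨hkpos, hk⟩)
    have hdk : (0:ℝ) < (k:ℝ) * mb - C y k := sub_pos.2 (hden k hkpos hk)
    have hkey : θ * ((k:ℝ) * mb - C y k) ≤ C x k - C y k := by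
      have h := mul_le_mul_of_nonneg_right hθle (le_of_lt hdk)
      rwa [hg, div_mul_cancel₀ _ (ne_of_gt hdk)] at h
    nlinarith [hkey]
  have hztouch : C z k0 = C y k0 := by
    rw [hCz k0 (le_of_lt hk01.2), div_eq_iff (ne_of_gt h1θ)]
    have hkey : θ * ((k0:ℝ) * mb - C y k0) = C x k0 - C y k0 := by
      rw [hθ, hg, div_mul_cancel₀ _ (ne_of_gt hd0)]
    nlinarith [hkey]
  obtain ⟨μz, hz1, hz2, hz3, hz4⟩ :=
    touch_sol n IH z y hzmono hy hzsum hzmaj k0 hk01.1 hk01.2 hztouch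
  obtain ⟨κ, hκ1, hκ2, hκ3, hκ4⟩ := const_sol n (by omega) y mb hnmb
  set a : ℝ≥0∞ := ENNReal.ofReal θ with ha
  set b : ℝ≥0∞ := ENNReal.ofReal (1 - θ) with hb
  have hab : a + b = 1 := by
    rw [ha, hb, ← ENNReal.ofReal_add (le_of_lt hθpos) (le_of_lt h1θ)]
    norm_num
  have haT : a ≠ ⊤ := ENNReal.ofReal_ne_top
  have hbT : b ≠ ⊤ := ENNReal.ofReal_ne_top
  refine ⟨fun i => a • κ i + b • μz i, ?_, ?_, ?_, ?_⟩
  · intro i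
    haveI := hκ1 i
    haveI := hz1 i
    constructor
    rw [Measure.add_apply, Measure.smul_apply, Measure.smul_apply, measure_univ, measure_univ,
      smul_eq_mul, smul_eq_mul, mul_one, mul_one, hab]
  · rw [Finset.sum_add_distrib, ← Finset.smul_sum, ← Finset.smul_sum, hκ2, hz2, ← add_smul,
      hab, one_smul]
  · intro i
    have hκle : κ i ≤ ∑ k, Measure.dirac (y k) := hκ2 ▸ le_sum_measure κ i
    have hzle : μz i ≤ ∑ k, Measure.dirac (y k) := hz2 ▸ le_sum_measure μz i
    have hiκ : Integrable (fun t : ℝ => t) (κ i) := (integrable_id_sum_dirac y).mono_measure hκle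
    have hiz : Integrable (fun t : ℝ => t) (μz i) := (integrable_id_sum_dirac y).mono_measure hzle
    rw [integral_add_measure (hiκ.smul_measure haT) (hiz.smul_measure hbT),
      integral_smul_measure, integral_smul_measure, hκ3 i, hz3 i, ha, hb,
      ENNReal.toReal_ofReal (le_of_lt hθpos), ENNReal.toReal_ofReal (le_of_lt h1θ),
      smul_eq_mul, smul_eq_mul, hz]
    field_simp
    ring
  · intro i j hij t
    rw [Measure.add_apply, Measure.add_apply, Measure.smul_apply, Measure.smul_apply,
      Measure.smul_apply, Measure.smul_apply, smul_eq_mul, smul_eq_mul, smul_eq_mul, smul_eq_mul]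
    exact add_le_add (mul_le_mul_right (hκ4 i j hij t) a) (mul_le_mul_right (hz4 i j hij t) b)

end StrassenAux3

/-- **Strassen's theorem with a stochastic ordering constraint (discrete form).**
If `x ≼ y` (both nondecreasing), then the counting measure on `{y_1,…,y_n}`
splits into probability measures `μ_1, …, μ_n` with barycenters `x_1, …, x_n`
that are nondecreasing in stochastic order. -/
theorem exists_stochastically_ordered_disintegration (n : ℕ) (x y : Fin n → ℝ)
    (hx : Monotone x) (hy : Monotone y)
    (hsum : ∑ i, x i = ∑ i, y i)
    (hmaj : ∀ k : ℕ, k < n →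
      ∑ i ∈ Finset.univ.filter (fun i : Fin n => (i : ℕ) < k), y i ≤
        ∑ i ∈ Finset.univ.filter (fun i : Fin n => (i : ℕ) < k), x i) :
    ∃ μ : Fin n → Measure ℝ,
      (∀ i, IsProbabilityMeasure (μ i)) ∧
      (∑ i, μ i = ∑ k, Measure.dirac (y k)) ∧
      (∀ i, ∫ t, t ∂(μ i) = x i) ∧
      (∀ i j : Fin n, i ≤ j → ∀ t : ℝ, (μ j) (Set.Iic t) ≤ (μ i) (Set.Iic t)) :=
  StrassenAux3.main n x y hx hy hsum hmaj
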